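/- For any ε > 0 and any integer n > 1, consider the n × (n+1) game with u₁(i,j) = 1 − ε for i ≠ j ≤ n, u₁(i,i) = 1, u₁(i,n+1) = 0, u₂(i,j) = 1 for i ≠ j ≤ n, u₂(i,i) = 0, u₂(i,n+1) = (n − 1/2)/n. For any SIS partition 𝒮 with |𝒮| > 1, there exists an uncorrelated profile with no undetectable beneficial deviations that gives the row player expected utility at least 1 − ε. -/
import Mathlib


open Finset

/-- Row payoffs of the game of Proposition `closetonone`:
u₁(i,j) = 1 − ε for i ≠ j ≤ n, u₁(i,i) = 1, u₁(i,n+1) = 0. -/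
noncomputable def hU1 (n : ℕ) (ε : ℝ) : Fin n → Fin (n+1) → ℝ := fun i j =>
  if (j : ℕ) < n then (if (j : ℕ) = (i : ℕ) then 1 else 1 - ε) else 0

/-- Column payoffs: u₂(i,j) = 1 for i ≠ j ≤ n, u₂(i,i) = 0,
u₂(i,n+1) = (n − 1/2)/n. -/
noncomputable def hU2 (n : ℕ) : Fin n → Fin (n+1) → ℝ := fun i j =>
  if (j : ℕ) < n then (if (j : ℕ) = (i : ℕ) then 0 else 1)
  else ((n : ℝ) - 1/2) / n

/-- if the SIS partition has more than one element (the SIS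
labeling is not constant), then there exists an uncorrelated profile with no
undetectable beneficial deviations giving the row player utility ≥ 1 − ε. -/
theorem close_to_no_commitment
    {ι : Type*} (n : ℕ) (hn : 1 < n) (ε : ℝ) (hε : 0 < ε)
    (sis : Fin n → ι)
    (hnc : ∃ r r' : Fin n, sis r ≠ sis r') :
    ∃ (σ1 : Fin n → ℝ) (σ2 : Fin (n+1) → ℝ),
      ((∀ r, 0 ≤ σ1 r) ∧ ∑ r, σ1 r = 1) ∧
      ((∀ c, 0 ≤ σ2 c) ∧ ∑ c, σ2 c = 1) ∧
      (∀ c, 0 < σ2 c → ∀ c',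
        ∑ r, σ1 r * hU2 n r c' ≤ ∑ r, σ1 r * hU2 n r c) ∧
      (∀ r, 0 < σ1 r → ∀ r', sis r' = sis r →
        ∑ c, σ2 c * hU1 n ε r' c ≤ ∑ c, σ2 c * hU1 n ε r c) ∧
      1 - ε ≤ ∑ r, ∑ c, σ1 r * σ2 c * hU1 n ε r c := by
  obtain ⟨r0, r1, hne⟩ := hnc
  have hr01 : r0 ≠ r1 := fun h => hne (by rw [h])
  set c0 : Fin (n+1) := r0.castSucc with hc0
  refine ⟨fun r => if r = r1 then 1 else 0, fun c => if c = c0 then 1 else 0,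
    ⟨fun r => by positivity, by simp⟩, ⟨fun c => by positivity, by simp⟩, ?_, ?_, ?_⟩
  · intro c hc c'
    have hcc : c = c0 := by by_contra h; simp [h] at hc
    subst hcc
    have h1 : ∀ c'', ∑ r, (if r = r1 then (1:ℝ) else 0) * hU2 n r c'' = hU2 n r1 c'' := by
      intro c''
      rw [Finset.sum_eq_single r1] <;> simp +contextual
    rw [h1, h1]
    have hval : (c0 : ℕ) = (r0 : ℕ) := rfl
    have hr0lt : (r0 : ℕ) < n := r0.isLt
    have hne' : (r0 : ℕ) ≠ (r1 : ℕ) := fun h => hr01 (Fin.ext h)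
    have hrhs : hU2 n r1 c0 = 1 := by simp [hU2, hval, hr0lt, hne']
    rw [hrhs]
    unfold hU2
    have hn' : (1:ℝ) ≤ n := by exact_mod_cast hn.le
    split
    · split <;> norm_num
    · rw [div_le_one (by linarith)]
      linarith
  · intro r hr r' hsis
    have hrr : r = r1 := by by_contra h; simp [h] at hr
    subst hrr
    have h1 : ∀ rr, ∑ c, (if c = c0 then (1:ℝ) else 0) * hU1 n ε rr c = hU1 n ε rr c0 := by
      intro rr
      rw [Finset.sum_eq_single c0] <;> simp +contextual
    rw [h1, h1]
    have hval : (c0 : ℕ) = (r0 : ℕ) := rfl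
    have hr0lt : (r0 : ℕ) < n := r0.isLt
    have hne' : (r0 : ℕ) ≠ (r : ℕ) := fun h => hr01 (Fin.ext h)
    have hrhs : hU1 n ε r c0 = 1 - ε := by simp [hU1, hval, hr0lt, hne']
    rw [hrhs]
    have hner' : (r0 : ℕ) ≠ (r' : ℕ) := by
      intro h
      exact hne (by rw [Fin.ext h]; exact hsis)
    simp [hU1, hval, hr0lt, hner']
  · have h1 : ∑ r, ∑ c, (if r = r1 then (1:ℝ) else 0) * (if c = c0 then (1:ℝ) else 0)
        * hU1 n ε r c = hU1 n ε r1 c0 := by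
      rw [Finset.sum_eq_single r1]
      · rw [Finset.sum_eq_single c0] <;> simp +contextual
      · intro b _ hb; simp [hb]
      · simp
    rw [h1]
    have hval : (c0 : ℕ) = (r0 : ℕ) := rfl
    have hr0lt : (r0 : ℕ) < n := r0.isLt
    have hne' : (r0 : ℕ) ≠ (r1 : ℕ) := fun h => hr01 (Fin.ext h)
    simp [hU1, hval, hr0lt, hne']
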